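/- Let N, d ≥ 1, let ν_I : (ZMod N)^I → ℝ for I ⊊ {1,…,d} be arbitrary weights, and let D be the associated dual-function operator. Let Ω ⊆ (ZMod N)^d have face structure. If g : (ZMod N)^d → ℝ vanishes outside Ω, then Dg vanishes outside Ω. -/

import Mathlib

noncomputable section
open Finset

/-- `P_ω(x,y)`: the point whose `i`-th coordinate is `x i` if `ω i = false` and `y i` otherwise. -/
def proj {ι : Type*} {N : ℕ} (ω : ι → Bool) (x y : ι → ZMod N) : ι → ZMod N :=
  fun i => if ω i then y i else x i

/-- `P_{ω_I}(x_I, y_I)` as a function on the subtype `↥I`. -/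
def projI {ι : Type*} {N : ℕ} {I : Finset ι} (ω : I → Bool) (x y : ι → ZMod N) :
    I → ZMod N :=
  fun i => if ω i then y i.1 else x i.1

/-- The dual function `Df`. -/
def dualFn {ι : Type*} [Fintype ι] [DecidableEq ι] {N : ℕ} [NeZero N]
    (ν : (I : Finset ι) → (I → ZMod N) → ℝ) (f : (ι → ZMod N) → ℝ)
    (x : ι → ZMod N) : ℝ :=
  Finset.expect Finset.univ fun y : ι → ZMod N =>
    (∏ ω ∈ univ.filter (fun ω : ι → Bool => ω ≠ fun _ => false), f (proj ω x y)) *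
      ∏ I ∈ univ.filter (fun I : Finset ι => I ≠ univ),
        ∏ ω ∈ univ.filter (fun ω : I → Bool => ω ≠ fun _ => false), ν I (projI ω x y)

/-- A set `Ω` has face structure if it is the intersection of sets `Ω_J` over `∅ ≠ J ⊊ ι`,
where membership in `Ω_J` depends only on the coordinates outside of `J`. -/
def HasFaceStructure {ι : Type*} [Fintype ι] [DecidableEq ι] {N : ℕ}
    (Ω : Set (ι → ZMod N)) : Prop :=
  ∃ ΩJ : Finset ι → Set (ι → ZMod N),
    (∀ J : Finset ι, J ≠ ∅ → J ≠ univ →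
      ∀ x y : ι → ZMod N, (∀ i, i ∉ J → x i = y i) → (x ∈ ΩJ J → y ∈ ΩJ J)) ∧
    Ω = ⋂ J ∈ {J : Finset ι | J ≠ ∅ ∧ J ≠ univ}, ΩJ J

/-! If `x ∉ Ω`, then `x ∉ Ω_J` for some proper nonempty `J`. Taking `ω = 1_J`, every point
`P_ω(x,y)` agrees with `x` off `J`, hence lies outside `Ω_J ⊇ Ω`; so the factor `g (P_ω(x,y))`
kills every term of the average defining `Dg(x)`. -/

variable {ι : Type*} {N : ℕ}

theorem proj_apply_of_notMem [DecidableEq ι] {J : Finset ι} (x y : ι → ZMod N) {i : ι}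
    (hi : i ∉ J) :
    proj (fun j => decide (j ∈ J)) x y i = x i := by
  simp [proj, hi]

theorem dualFn_eq_zero_of_proj_eq_zero [Fintype ι] [DecidableEq ι] [NeZero N]
    (ν : (I : Finset ι) → (I → ZMod N) → ℝ) {f : (ι → ZMod N) → ℝ} {x : ι → ZMod N}
    {ω : ι → Bool} (hω : ω ≠ fun _ => false) (hf : ∀ y, f (proj ω x y) = 0) :
    dualFn ν f x = 0 := by
  refine Finset.expect_eq_zero fun y _ => ?_
  have hω_mem : ω ∈ univ.filter (fun ω : ι → Bool => ω ≠ fun _ => false) := by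
    simpa using hω
  rw [Finset.prod_eq_zero hω_mem (hf y), zero_mul]

theorem HasFaceStructure.exists_face_of_notMem [Fintype ι] [DecidableEq ι]
    {Ω : Set (ι → ZMod N)} (hΩ : HasFaceStructure Ω) {x : ι → ZMod N} (hx : x ∉ Ω) :
    ∃ J : Finset ι, J.Nonempty ∧ ∀ z, (∀ i, i ∉ J → z i = x i) → z ∉ Ω := by
  obtain ⟨ΩJ, hdep, rfl⟩ := hΩ
  simp only [Set.mem_iInter, not_forall] at hx ⊢
  obtain ⟨J, ⟨hJ_ne, hJ_univ⟩, hxJ⟩ := hx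
  exact ⟨J, nonempty_iff_ne_empty.2 hJ_ne, fun z hz =>
    ⟨J, ⟨hJ_ne, hJ_univ⟩, fun hzJ => hxJ (hdep J hJ_ne hJ_univ z x hz hzJ)⟩⟩

theorem dualFn_vanishes_outside_general (N d : ℕ) [NeZero N]
    (ν : (I : Finset (Fin d)) → (I → ZMod N) → ℝ)
    (Ω : Set (Fin d → ZMod N)) (hΩ : HasFaceStructure Ω)
    (g : (Fin d → ZMod N) → ℝ) (hg : ∀ x, x ∉ Ω → g x = 0) :
    ∀ x, x ∉ Ω → dualFn ν g x = 0 := by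
  intro x hx
  obtain ⟨J, ⟨i, hi⟩, hJ⟩ := hΩ.exists_face_of_notMem hx
  have hω : (fun j => decide (j ∈ J)) ≠ fun _ => false := fun h => by
    simpa [hi] using congrFun h i
  exact dualFn_eq_zero_of_proj_eq_zero ν hω fun y =>
    hg _ (hJ _ fun _ hj => proj_apply_of_notMem x y hj)

/-- If `g` vanishes outside a set `Ω` with face structure, then so does its dual function. -/
theorem dualFn_vanishes_outside (N d : ℕ) [NeZero N] (hd : 1 ≤ d)
    (ν : (I : Finset (Fin d)) → (I → ZMod N) → ℝ)
    (Ω : Set (Fin d → ZMod N)) (hΩ : HasFaceStructure Ω)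
    (g : (Fin d → ZMod N) → ℝ) (hg : ∀ x, x ∉ Ω → g x = 0) :
    ∀ x, x ∉ Ω → dualFn ν g x = 0 :=
  dualFn_vanishes_outside_general N d ν Ω hΩ g hg

end
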